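/- arXiv:2207.03100 — 2 statements merged into one kernel-verified Lean document; each statement's English description precedes it below -/
import Mathlib

section
/- With X the ordered set of leaf classes [t,j] of a Ore forest-skein category F and α: G^V ↷ X the canonical action of the V-version forest-skein group, the subgroup G = Frac(F,1) equals exactly the set of elements of G^V whose action preserves the total order ⪯ on X. -/
namespace ForestSkein

/-- A coloured finite rooted planar binary tree with colours in `S`. -/
inductive CTree (S : Type) : Type
  | leaf : CTree S
  | node : S → CTree S → CTree S → CTree S

namespace CTree

/-- Number of leaves of a coloured binary tree. -/
def leaves {S : Type} : CTree S → ℕ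
  | .leaf => 1
  | .node _ l r => leaves l + leaves r

/-- Graft a list of trees onto the leaves of a tree (vertical stacking). -/
def graft {S : Type} : CTree S → List (CTree S) → CTree S
  | .leaf, gs => gs.headD .leaf
  | .node c l r, gs => .node c (graft l (gs.take (leaves l))) (graft r (gs.drop (leaves l)))

/-- Relabel the colours of a tree along a map of colour sets. -/
def recolour {S S' : Type} (c : S → S') : CTree S → CTree S'
  | .leaf => .leaf
  | .node x l r => .node (c x) (recolour c l) (recolour c r)

end CTree

/-- A coloured forest: a finite list of coloured binary trees.  Its roots are the
entries of the list, its leaves are the leaves of its trees. -/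
abbrev Forest (S : Type) := List (CTree S)

/-- Total number of leaves of a forest. -/
def Forest.leaves {S : Type} (f : Forest S) : ℕ := (f.map CTree.leaves).sum

/-- Composition of forests: `Forest.comp f g` stacks `g` on top of `f`, attaching
the `j`-th root of `g` to the `j`-th leaf of `f` (meaningful when
`Forest.leaves f = g.length`). -/
def Forest.comp {S : Type} : Forest S → Forest S → Forest S
  | [], _ => []
  | t :: ts, g =>
      CTree.graft t (g.take (CTree.leaves t)) :: Forest.comp ts (g.drop (CTree.leaves t))

/-- The elementary forest `a_{j,n}` (1-indexed) with `n` roots, a single `a`-coloured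
caret at the `j`-th root, and all other trees trivial. -/
def elemForest {S : Type} (a : S) (j n : ℕ) : Forest S :=
  List.replicate (j - 1) CTree.leaf ++ [CTree.node a CTree.leaf CTree.leaf] ++
    List.replicate (n - j) CTree.leaf

/-- A set of skein relations consists of pairs of trees with equal numbers of leaves. -/
def LeafPres {S : Type} (R : CTree S → CTree S → Prop) : Prop :=
  ∀ t t' : CTree S, R t t' → CTree.leaves t = CTree.leaves t'

/-- The equivalence relation on coloured forests generated by a set `R` of skein
relations (pairs of trees), closed under composition and tensor product
(horizontal juxtaposition).  The quotient is the forest-skein category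
presented by `R`. -/
inductive SkeinEquiv {S : Type} (R : CTree S → CTree S → Prop) : Forest S → Forest S → Prop
  | of {t t' : CTree S} : R t t' → SkeinEquiv R [t] [t']
  | refl (f : Forest S) : SkeinEquiv R f f
  | symm {f g : Forest S} : SkeinEquiv R f g → SkeinEquiv R g f
  | trans {f g h : Forest S} : SkeinEquiv R f g → SkeinEquiv R g h → SkeinEquiv R f h
  | comp {f f' g g' : Forest S} :
      SkeinEquiv R f f' → SkeinEquiv R g g' → SkeinEquiv R (Forest.comp f g) (Forest.comp f' g')
  | tensor {f f' g g' : Forest S} :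
      SkeinEquiv R f f' → SkeinEquiv R g g' → SkeinEquiv R (f ++ g) (f' ++ g')

/-- Left-cancellativity of a forest-skein category given by the equivalence `E` on
forests: `f ∘ g = f ∘ h` implies `g = h`. -/
def LeftCancel {S : Type} (E : Forest S → Forest S → Prop) : Prop :=
  ∀ f g h : Forest S, Forest.leaves f = g.length → Forest.leaves f = h.length →
    E (Forest.comp f g) (Forest.comp f h) → E g h

/-- Ore's property for the forest-skein category given by the equivalence `E`:
any two forests with the same number of roots admit a common right multiple. -/
def OreProp {S : Type} (E : Forest S → Forest S → Prop) : Prop :=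
  ∀ f g : Forest S, f.length = g.length →
    ∃ p q : Forest S, Forest.leaves f = p.length ∧ Forest.leaves g = q.length ∧
      E (Forest.comp f p) (Forest.comp g q)

/-- Equality of the fractions `t ∘ s⁻¹` and `t' ∘ s'⁻¹` in the fraction group:
there are forests `f, f'` with `t ∘ f = t' ∘ f'` and `s ∘ f = s' ∘ f'` modulo `E`. -/
def FracRel {S : Type} (E : Forest S → Forest S → Prop) (t s t' s' : CTree S) : Prop :=
  ∃ f f' : Forest S, CTree.leaves t = f.length ∧ CTree.leaves t' = f'.length ∧
    E [CTree.graft t f] [CTree.graft t' f'] ∧ E [CTree.graft s f] [CTree.graft s' f']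

/-- `leafPos f j` is the (0-indexed) index `j^f` of the first leaf of the `j`-th tree
of the forest `f` among all leaves of `f`. -/
def leafPos {S : Type} (f : Forest S) (j : ℕ) : ℕ := Forest.leaves (f.take j)

/-- Generating relation for the set `X` of marked-leaf classes `[t, j]`:
skein equivalence of the underlying trees, and growth `(t, j) ~ (t ∘ f, j^f)`. -/
inductive MLRel {S : Type} (E : Forest S → Forest S → Prop) :
    CTree S × ℕ → CTree S × ℕ → Prop
  | skein {t t' : CTree S} {j : ℕ} : E [t] [t'] → MLRel E (t, j) (t', j)
  | grow (t : CTree S) (f : Forest S) (j : ℕ) (hf : CTree.leaves t = f.length) :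
      MLRel E (t, j) (CTree.graft t f, leafPos f j)

/-- Equality of marked-leaf classes in `X`. -/
def MLEquiv {S : Type} (E : Forest S → Forest S → Prop) :
    CTree S × ℕ → CTree S × ℕ → Prop :=
  Relation.EqvGen (MLRel E)

/-- The total order `⪯` on marked leaves: `[t, j] ⪯ [t', j']` when for some pair of
forests with `t ∘ f = t' ∘ f'` (modulo `E`) one has `j^f ≤ j'^{f'}`. -/
def MLLe {S : Type} (E : Forest S → Forest S → Prop) (p q : CTree S × ℕ) : Prop :=
  ∃ f f' : Forest S, CTree.leaves p.1 = f.length ∧ CTree.leaves q.1 = f'.length ∧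
    E [CTree.graft p.1 f] [CTree.graft q.1 f'] ∧ leafPos f p.2 ≤ leafPos f' q.2

/-- `blockIdx f ℓ = (j, r)`: the leaf `ℓ` of a forest grown by `f` lies in the block
coming from the `j`-th tree of `f`, at offset `r` inside that block. -/
def blockIdx {S : Type} : Forest S → ℕ → ℕ × ℕ
  | [], l => (0, l)
  | t :: ts, l =>
      if l < CTree.leaves t then (0, l)
      else ((blockIdx ts (l - CTree.leaves t)).1 + 1, (blockIdx ts (l - CTree.leaves t)).2)

/-- The block permutation `π^f` induced on the leaves of a grown tree: the block of
leaves coming from the `j`-th tree of `f` is sent, preserving the inner order, to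
the block sitting at position `π j` in the permuted forest `g`. -/
def blockPerm {S : Type} (π : ℕ → ℕ) (f g : Forest S) : ℕ → ℕ :=
  fun l => Forest.leaves (g.take (π (blockIdx f l).1)) + (blockIdx f l).2

/-- A representative `s ∘ π ∘ t⁻¹` of an element of the `V`-version forest-skein
group: numerator tree, permutation of the leaves, denominator tree. -/
structure VTriple (S : Type) where
  num : CTree S
  perm : ℕ → ℕ
  den : CTree S

/-- Generating relation for equality of `V`-fractions: skein equivalence of both
trees, and simultaneous growth of numerator and denominator through the
Zappa–Szép rule `π ∘ f = f^π ∘ π^f`. -/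
inductive VRel {S : Type} (E : Forest S → Forest S → Prop) : VTriple S → VTriple S → Prop
  | skein {s s' t t' : CTree S} {π : ℕ → ℕ} :
      E [s] [s'] → E [t] [t'] → VRel E ⟨s, π, t⟩ ⟨s', π, t'⟩
  | grow (s t : CTree S) (π : ℕ → ℕ) (f g : Forest S)
      (hf : CTree.leaves t = f.length) (hg : CTree.leaves s = g.length)
      (hmatch : ∀ j : ℕ, j < f.length →
        π j < g.length ∧ g.getD (π j) CTree.leaf = f.getD j CTree.leaf) :
      VRel E ⟨s, π, t⟩ ⟨CTree.graft s g, blockPerm π f g, CTree.graft t f⟩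

/-- A valid `V`-triple: trees with the same number `n` of leaves and a permutation
of `{0, …, n-1}` fixing everything else. -/
def VValid {S : Type} (v : VTriple S) : Prop :=
  CTree.leaves v.num = CTree.leaves v.den ∧
  (∀ i : ℕ, i < CTree.leaves v.den → v.perm i < CTree.leaves v.den) ∧
  Set.InjOn v.perm (Set.Iio (CTree.leaves v.den)) ∧
  ∀ i : ℕ, CTree.leaves v.den ≤ i → v.perm i = i


section Aux

variable {S : Type}

lemma CTree.leaves_pos (t : CTree S) : 0 < t.leaves := by
  induction t with
  | leaf => simp [CTree.leaves]
  | node c l r ihl ihr => simp only [CTree.leaves]; omega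

lemma Forest.leaves_nil : Forest.leaves ([] : Forest S) = 0 := rfl

lemma Forest.leaves_cons (t : CTree S) (ts : Forest S) :
    Forest.leaves (t :: ts) = t.leaves + Forest.leaves ts := by
  simp [Forest.leaves]

lemma Forest.leaves_append (a b : Forest S) :
    Forest.leaves (a ++ b) = Forest.leaves a + Forest.leaves b := by
  simp [Forest.leaves]

lemma CTree.leaves_graft (t : CTree S) (gs : Forest S) :
    (CTree.graft t gs).leaves
      = Forest.leaves (gs.take t.leaves) + (t.leaves - (gs.take t.leaves).length) := by
  induction t generalizing gs with
  | leaf =>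
    cases gs with
    | nil => simp [CTree.graft, CTree.leaves, Forest.leaves]
    | cons a as => simp [CTree.graft, CTree.leaves, Forest.leaves]
  | node c l r ihl ihr =>
    simp only [CTree.graft, CTree.leaves, ihl, ihr, List.take_take, min_self,
      List.length_take, List.length_drop, List.take_add, Forest.leaves_append,
      List.length_append]
    omega

/-- leaf-count version of forest composition -/
def compCount : List ℕ → List ℕ → List ℕ
  | [], _ => []
  | n :: ns, ms => ((ms.take n).sum + (n - (ms.take n).length)) :: compCount ns (ms.drop n)

lemma mapLeaves_comp (f g : Forest S) :
    (Forest.comp f g).map CTree.leaves = compCount (f.map CTree.leaves) (g.map CTree.leaves) := by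
  induction f generalizing g with
  | nil => rfl
  | cons t ts ih =>
    simp only [Forest.comp, List.map_cons, compCount, CTree.leaves_graft, ih,
      List.take_take, min_self, ← List.map_take, ← List.map_drop, Forest.leaves,
      List.length_take, List.length_map]

lemma SkeinEquiv.mapLeaves {R : CTree S → CTree S → Prop} (hR : LeafPres R)
    {f g : Forest S} (h : SkeinEquiv R f g) :
    f.map CTree.leaves = g.map CTree.leaves := by
  induction h with
  | of h => simp [hR _ _ h]
  | refl => rfl
  | symm _ ih => exact ih.symm
  | trans _ _ ih1 ih2 => exact ih1.trans ih2
  | comp _ _ ih1 ih2 => rw [mapLeaves_comp, mapLeaves_comp, ih1, ih2]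
  | tensor _ _ ih1 ih2 => simp only [List.map_append, ih1, ih2]

lemma SkeinEquiv.leaves_eq {R : CTree S → CTree S → Prop} (hR : LeafPres R)
    {t t' : CTree S} (h : SkeinEquiv R [t] [t']) : t.leaves = t'.leaves := by
  have := SkeinEquiv.mapLeaves hR h
  simpa using this

lemma leafPos_eq_sum (f : Forest S) (j : ℕ) :
    leafPos f j = ((f.map CTree.leaves).take j).sum := by
  simp [leafPos, Forest.leaves, List.map_take]

lemma leafPos_zero (f : Forest S) : leafPos f 0 = 0 := by
  simp [leafPos, Forest.leaves]

lemma leafPos_cons_succ (t : CTree S) (ts : Forest S) (j : ℕ) :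
    leafPos (t :: ts) (j + 1) = t.leaves + leafPos ts j := by
  simp [leafPos, List.take_succ_cons, Forest.leaves_cons]

lemma sum_take_le (l : List ℕ) (j : ℕ) : (l.take j).sum ≤ l.sum := by
  conv_rhs => rw [← List.take_append_drop j l]
  rw [List.sum_append]
  omega

lemma leafPos_le (f : Forest S) (j : ℕ) : leafPos f j ≤ Forest.leaves f := by
  rw [leafPos_eq_sum]
  exact sum_take_le _ _

lemma leafPos_mono (f : Forest S) {j j' : ℕ} (h : j ≤ j') : leafPos f j ≤ leafPos f j' := by
  rw [leafPos_eq_sum, leafPos_eq_sum]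
  calc ((f.map CTree.leaves).take j).sum
      = (((f.map CTree.leaves).take j').take j).sum := by
        rw [List.take_take, min_eq_left h]
    _ ≤ ((f.map CTree.leaves).take j').sum := sum_take_le _ _

lemma leafPos_succ (f : Forest S) (j : ℕ) (h : j < f.length) :
    leafPos f (j + 1) = leafPos f j + (f.getD j CTree.leaf).leaves := by
  induction f generalizing j with
  | nil => simp at h
  | cons t ts ih =>
    cases j with
    | zero => simp [leafPos_cons_succ, leafPos_zero]
    | succ k =>
      have hk : k < ts.length := by simpa using h
      simp only [leafPos_cons_succ, ih k hk, List.getD_cons_succ]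
      omega

lemma leafPos_lt (f : Forest S) (j : ℕ) (h : j < f.length) :
    leafPos f j < Forest.leaves f := by
  have h1 := leafPos_succ f j h
  have h2 := leafPos_le f (j + 1)
  have h3 := CTree.leaves_pos (f.getD j CTree.leaf)
  omega

lemma leafPos_strict (f : Forest S) {j j' : ℕ} (h : j < j') (hj : j < f.length) :
    leafPos f j < leafPos f j' := by
  have h1 := leafPos_succ f j hj
  have h2 := leafPos_mono f (show j + 1 ≤ j' from h)
  have h3 := CTree.leaves_pos (f.getD j CTree.leaf)
  omega

lemma leafPos_replicate (n j : ℕ) :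
    leafPos (List.replicate n (CTree.leaf : CTree S)) j = min j n := by
  simp [leafPos, List.take_replicate, Forest.leaves, List.map_replicate, List.sum_replicate, CTree.leaves]

lemma blockIdx_spec (f : Forest S) (l : ℕ) (h : l < Forest.leaves f) :
    (blockIdx f l).1 < f.length ∧
    (blockIdx f l).2 < (f.getD (blockIdx f l).1 CTree.leaf).leaves ∧
    l = leafPos f (blockIdx f l).1 + (blockIdx f l).2 := by
  induction f generalizing l with
  | nil => simp [Forest.leaves_nil] at h
  | cons t ts ih =>
    by_cases hl : l < t.leaves
    · simp only [blockIdx, if_pos hl]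
      exact ⟨by simp, by simpa using hl, by simp [leafPos_zero]⟩
    · have h2 : l - t.leaves < Forest.leaves ts := by
        rw [Forest.leaves_cons] at h; omega
      obtain ⟨h1', h2', h3'⟩ := ih _ h2
      simp only [blockIdx, if_neg hl]
      refine ⟨by simpa using h1', by simpa using h2', ?_⟩
      simp only [leafPos_cons_succ]
      omega

lemma blockIdx_leafPos (f : Forest S) (j : ℕ) (h : j < f.length) :
    blockIdx f (leafPos f j) = (j, 0) := by
  induction f generalizing j with
  | nil => simp at h
  | cons t ts ih =>
    cases j with
    | zero => simp [leafPos_zero, blockIdx, CTree.leaves_pos t]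
    | succ k =>
      have hk : k < ts.length := by simpa using h
      have hnlt : ¬ (t.leaves + leafPos ts k < t.leaves) := by omega
      rw [leafPos_cons_succ]
      simp [blockIdx, hnlt, Nat.add_sub_cancel_left, ih k hk]

lemma MLLe_of_min_le {E : Forest S → Forest S → Prop}
    (hErefl : ∀ f : Forest S, E f f) (w : CTree S) {a b : ℕ}
    (h : min a w.leaves ≤ min b w.leaves) : MLLe E (w, a) (w, b) := by
  refine ⟨List.replicate w.leaves CTree.leaf, List.replicate w.leaves CTree.leaf,
    by simp, by simp, hErefl _, ?_⟩
  simpa [leafPos_replicate] using h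

lemma min_le_of_MLLe {R : CTree S → CTree S → Prop} (hR : LeafPres R)
    (hLC : LeftCancel (SkeinEquiv R)) {w : CTree S} {a b : ℕ}
    (h : MLLe (SkeinEquiv R) (w, a) (w, b)) : min a w.leaves ≤ min b w.leaves := by
  obtain ⟨f, f', hf, hf', hE, hle⟩ := h
  simp only at hf hf' hE hle
  have hcomp : Forest.comp [w] f = [CTree.graft w f] := by
    simp [Forest.comp, List.take_of_length_le (le_of_eq hf.symm)]
  have hcomp' : Forest.comp [w] f' = [CTree.graft w f'] := by
    simp [Forest.comp, List.take_of_length_le (le_of_eq hf'.symm)]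
  have hE' : SkeinEquiv R f f' := by
    apply hLC [w] f f' (by simpa [Forest.leaves] using hf) (by simpa [Forest.leaves] using hf')
    rw [hcomp, hcomp']
    exact hE
  have hmap := SkeinEquiv.mapLeaves hR hE'
  have hpe : ∀ j, leafPos f' j = leafPos f j := by
    intro j; rw [leafPos_eq_sum, leafPos_eq_sum, hmap]
  rw [hpe] at hle
  rcases le_or_gt w.leaves b with hb | hb
  · have h1 : min a w.leaves ≤ w.leaves := min_le_right _ _
    omega
  · have hab : a ≤ b := by
      by_contra hab
      have : leafPos f b < leafPos f a := leafPos_strict f (by omega) (by omega)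
      omega
    omega

/-- order-preservation invariant on `V`-triples -/
def OP (v : VTriple S) : Prop :=
  ∀ j j' : ℕ, j < j' → j' < CTree.leaves v.den →
    min (v.perm j) v.num.leaves < min (v.perm j') v.num.leaves

lemma OP_iff_of_VRel {R : CTree S → CTree S → Prop} (hR : LeafPres R)
    {a b : VTriple S} (h : VRel (SkeinEquiv R) a b) : OP a ↔ OP b := by
  cases h with
  | @skein s s' t t' π hs ht =>
    have h1 : s.leaves = s'.leaves := SkeinEquiv.leaves_eq hR hs
    have h2 : t.leaves = t'.leaves := SkeinEquiv.leaves_eq hR ht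
    show (∀ j j', j < j' → j' < t.leaves → min (π j) s.leaves < min (π j') s.leaves) ↔
         (∀ j j', j < j' → j' < t'.leaves → min (π j) s'.leaves < min (π j') s'.leaves)
    rw [h1, h2]
  | grow s t π f gg hf hgg hmatch =>
    have hgt : (CTree.graft t f).leaves = Forest.leaves f := by
      rw [CTree.leaves_graft, List.take_of_length_le (le_of_eq hf.symm)]
      omega
    have hgs : (CTree.graft s gg).leaves = Forest.leaves gg := by
      rw [CTree.leaves_graft, List.take_of_length_le (le_of_eq hgg.symm)]
      omega
    constructor
    · -- OP ⟨s,π,t⟩ → OP of grown triple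
      intro hp l l' hll hl'
      show min (blockPerm π f gg l) (CTree.graft s gg).leaves
          < min (blockPerm π f gg l') (CTree.graft s gg).leaves
      have hl'2 : l' < Forest.leaves f := by
        have : l' < (CTree.graft t f).leaves := hl'
        omega
      have hl2 : l < Forest.leaves f := lt_trans hll hl'2
      obtain ⟨hj, hr, hlp⟩ := blockIdx_spec f l hl2
      obtain ⟨hj', hr', hlp'⟩ := blockIdx_spec f l' hl'2
      set j := (blockIdx f l).1 with hjdef
      set r := (blockIdx f l).2 with hrdef
      set j' := (blockIdx f l').1 with hjdef'
      set r' := (blockIdx f l').2 with hrdef'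
      have hbp : blockPerm π f gg l = leafPos gg (π j) + r := rfl
      have hbp' : blockPerm π f gg l' = leafPos gg (π j') + r' := rfl
      obtain ⟨hπj, hgf⟩ := hmatch j (by omega)
      obtain ⟨hπj', hgf'⟩ := hmatch j' (by omega)
      have hle1 : (gg.getD (π j) CTree.leaf).leaves = (f.getD j CTree.leaf).leaves :=
        congrArg CTree.leaves hgf
      have hle1' : (gg.getD (π j') CTree.leaf).leaves = (f.getD j' CTree.leaf).leaves :=
        congrArg CTree.leaves hgf'
      have hsucc : leafPos gg (π j + 1) = leafPos gg (π j) + (gg.getD (π j) CTree.leaf).leaves :=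
        leafPos_succ gg (π j) hπj
      have hsucc' : leafPos gg (π j' + 1) = leafPos gg (π j') + (gg.getD (π j') CTree.leaf).leaves :=
        leafPos_succ gg (π j') hπj'
      have hb1 : blockPerm π f gg l < Forest.leaves gg := by
        have := leafPos_le gg (π j + 1)
        rw [hbp]; omega
      have hb2 : blockPerm π f gg l' < Forest.leaves gg := by
        have := leafPos_le gg (π j' + 1)
        rw [hbp']; omega
      rcases Nat.lt_or_ge j j' with hjj | hjj
      · have hmm : min (π j) s.leaves < min (π j') s.leaves :=
          hp j j' hjj (show j' < t.leaves by omega)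
        rw [hgg] at hmm
        have hππ : π j < π j' := by omega
        have hmono := leafPos_mono gg (show π j + 1 ≤ π j' from hππ)
        rw [hgs, hbp, hbp']
        omega
      · have hjeq : j = j' := by
          by_contra hne
          have hj'j : j' < j := by omega
          have h5 := leafPos_succ f j' (by omega)
          have h6 := leafPos_mono f (show j' + 1 ≤ j from by omega)
          omega
        have hlpe : leafPos f j = leafPos f j' := by rw [hjeq]
        have hpe : leafPos gg (π j) = leafPos gg (π j') := by rw [hjeq]
        rw [hgs, hbp, hbp']
        omega
    · -- OP of grown triple → OP ⟨s,π,t⟩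
      intro hp j j' hjj hj'
      show min (π j) s.leaves < min (π j') s.leaves
      have hj'2 : j' < f.length := by
        have : j' < t.leaves := hj'
        omega
      have hj2 : j < f.length := lt_trans hjj hj'2
      have hll : leafPos f j < leafPos f j' := leafPos_strict f hjj hj2
      have hl' : leafPos f j' < (CTree.graft t f).leaves := by
        have := leafPos_lt f j' hj'2
        omega
      have hgrow : min (blockPerm π f gg (leafPos f j)) (CTree.graft s gg).leaves
          < min (blockPerm π f gg (leafPos f j')) (CTree.graft s gg).leaves :=
        hp (leafPos f j) (leafPos f j') hll hl'
      have hbi : blockIdx f (leafPos f j) = (j, 0) := blockIdx_leafPos f j hj2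
      have hbi' : blockIdx f (leafPos f j') = (j', 0) := blockIdx_leafPos f j' hj'2
      have hbp : blockPerm π f gg (leafPos f j) = leafPos gg (π j) := by
        unfold blockPerm
        rw [hbi]
        rfl
      have hbp' : blockPerm π f gg (leafPos f j') = leafPos gg (π j') := by
        unfold blockPerm
        rw [hbi']
        rfl
      rw [hbp, hbp', hgs] at hgrow
      obtain ⟨hπj, _⟩ := hmatch j (by omega)
      obtain ⟨hπj', _⟩ := hmatch j' (by omega)
      have hlt1 : leafPos gg (π j) < Forest.leaves gg := leafPos_lt gg (π j) hπj
      have hlt2 : leafPos gg (π j') < Forest.leaves gg := leafPos_lt gg (π j') hπj'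
      have hππ : π j < π j' := by
        by_contra hc
        have := leafPos_mono gg (show π j' ≤ π j from by omega)
        omega
      rw [hgg]
      omega

lemma OP_iff_of_chain {R : CTree S → CTree S → Prop} (hR : LeafPres R)
    {a b : VTriple S} (h : Relation.EqvGen (VRel (SkeinEquiv R)) a b) : OP a ↔ OP b := by
  induction h with
  | rel _ _ h => exact OP_iff_of_VRel hR h
  | refl => exact Iff.rfl
  | symm _ _ _ ih => exact ih.symm
  | trans _ _ _ _ _ ih1 ih2 => exact ih1.trans ih2

lemma strict_mono_on_id {n : ℕ} {π : ℕ → ℕ}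
    (hmono : ∀ j j' : ℕ, j < j' → j' < n → π j < π j')
    (hbd : ∀ i, i < n → π i < n) : ∀ i, i < n → π i = i := by
  have hge : ∀ i, i < n → i ≤ π i := by
    intro i
    induction i with
    | zero => intro _; exact Nat.zero_le _
    | succ k ih =>
      intro h
      have h1 := hmono k (k + 1) (Nat.lt_succ_self k) h
      have h2 := ih (by omega)
      omega
  have hgap : ∀ i d, i + d < n → π i + d ≤ π (i + d) := by
    intro i d
    induction d with
    | zero => intro _; simp
    | succ m ih =>
      intro h
      have h1 := ih (by omega)
      have h2 := hmono (i + m) (i + m + 1) (by omega) (by omega)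
      have h3 : i + (m + 1) = i + m + 1 := by omega
      rw [h3]
      omega
  intro i hi
  have h1 := hge i hi
  have h2 := hgap i (n - 1 - i) (by omega)
  have h3 : i + (n - 1 - i) = n - 1 := by omega
  rw [h3] at h2
  have h4 := hbd (n - 1) (by omega)
  omega

end Aux

/-- an element of the `V`-version forest-skein group `G^V`
(represented by a valid triple `s ∘ π ∘ t⁻¹`) belongs to the subgroup
`G = Frac(F,1)` (i.e. admits a representative with trivial permutation) if and
only if its canonical action on the totally ordered set `X` of marked-leaf
classes preserves the order `⪯`. -/
theorem G_equals_order_preserving {S : Type} (R : CTree S → CTree S → Prop)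
    (hR : LeafPres R)
    (hLC : LeftCancel (SkeinEquiv R)) (hOre : OreProp (SkeinEquiv R))
    (g : VTriple S) (hg : VValid g) :
    (∃ u v : CTree S, CTree.leaves u = CTree.leaves v ∧
        Relation.EqvGen (VRel (SkeinEquiv R)) g ⟨u, id, v⟩) ↔
    (∀ (u v : CTree S) (σ : ℕ → ℕ),
        Relation.EqvGen (VRel (SkeinEquiv R)) g ⟨u, σ, v⟩ →
        ∀ j j' : ℕ, j ≤ j' → j' < CTree.leaves v →
          MLLe (SkeinEquiv R) (u, σ j) (u, σ j')) := by
  constructor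
  · rintro ⟨u, v, huv, hch⟩ U V σ hrep j j' hjj hj'
    have hOPid : OP (⟨u, id, v⟩ : VTriple S) := by
      intro a b hab hb
      show min (id a) u.leaves < min (id b) u.leaves
      have hb' : b < u.leaves := by
        rw [huv]; exact hb
      simp only [id]
      omega
    have hOP : OP (⟨U, σ, V⟩ : VTriple S) :=
      ((OP_iff_of_chain hR hch).symm.trans (OP_iff_of_chain hR hrep)).mp hOPid
    rcases eq_or_lt_of_le hjj with rfl | hlt
    · exact MLLe_of_min_le (fun f => SkeinEquiv.refl f) U (le_refl _)
    · have hm := hOP j j' hlt hj'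
      exact MLLe_of_min_le (fun f => SkeinEquiv.refl f) U (le_of_lt hm)
  · intro hord
    obtain ⟨h1, h2, h3, h4⟩ := hg
    have hmin : ∀ j j' : ℕ, j ≤ j' → j' < g.den.leaves →
        min (g.perm j) g.num.leaves ≤ min (g.perm j') g.num.leaves := by
      intro j j' hjj hj'
      exact min_le_of_MLLe hR hLC
        (hord g.num g.den g.perm (Relation.EqvGen.refl g) j j' hjj hj')
    have hstrict : ∀ j j' : ℕ, j < j' → j' < g.den.leaves → g.perm j < g.perm j' := by
      intro j j' hjj hj'
      have hm := hmin j j' (le_of_lt hjj) hj'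
      have bj := h2 j (lt_trans hjj hj')
      have bj' := h2 j' hj'
      rw [h1] at hm
      have hne : g.perm j ≠ g.perm j' := by
        intro he
        have := h3 (Set.mem_Iio.mpr (lt_trans hjj hj')) (Set.mem_Iio.mpr hj') he
        omega
      omega
    have hid : g.perm = id := by
      funext i
      by_cases hi : i < g.den.leaves
      · exact strict_mono_on_id hstrict h2 i hi
      · exact h4 i (le_of_not_gt hi)
    refine ⟨g.num, g.den, h1, ?_⟩
    have heq : (⟨g.num, id, g.den⟩ : VTriple S) = g := by rw [← hid]
    rw [heq]
    exact Relation.EqvGen.refl g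


end ForestSkein
end

section
/- Let S be a nonempty set and τ: S → {nontrivial monochromatic binary trees} a map such that all trees τ_a have the same number of leaves n ≥ 2. Then the forest-skein category F_τ presented by colours S and skein relations C_a(τ_a) = C_b(τ_b) for all a ≠ b in S (where C_a colours every vertex by a) satisfies Ore's property: every tree of F_τ is dominated by a tree all of whose carets are copies of the common tree t = C_a(τ_a). -/
namespace ForestSkein

/-- `BuiltFrom t z`: all the "carets" of `z` are copies of the tree `t`. -/
inductive BuiltFrom {S : Type} (t : CTree S) : CTree S → Prop
  | leaf : BuiltFrom t CTree.leaf
  | graft (gs : List (CTree S)) (h : CTree.leaves t = gs.length)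
      (hgs : ∀ g ∈ gs, BuiltFrom t g) : BuiltFrom t (CTree.graft t gs)

/-! Write `t = C_{a₀}(τ_{a₀})`, `t_c = C_c(τ_c)` and `t^D` for `t` grafted on itself `D` levels
deep; since `t ∼ t_c`, also `t^D ∼ t_c^D`. Every tree `s` is dominated modulo the skein relations by
some `t^D`, by induction on `s`: if both subtrees of the root `c`-caret are dominated by `t^D`,
then `s` is dominated by the `c`-caret over two copies of `t_c^D`, a monochromatic `c`-tree. Such
a tree is a prefix of a complete binary `c`-tree, hence of `t_c^e ∼ t^e` for large `e`, because
`t_c` is a nontrivial `c`-tree. The `t^D` form a chain under domination, so any two trees have a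
common right multiple, and Ore's property for forests follows root by root. -/

namespace Forest

variable {S : Type}

theorem leaves_append_s18 (p q : Forest S) : leaves (p ++ q) = leaves p + leaves q := by
  simp [leaves]

theorem leaves_replicate (k : ℕ) (x : CTree S) :
    leaves (List.replicate k x) = k * x.leaves := by
  simp [leaves]

theorem exists_append_eq {gs : Forest S} {m k : ℕ} (h : gs.length = m + k) :
    ∃ fl fr : Forest S, gs = fl ++ fr ∧ fl.length = m ∧ fr.length = k :=
  ⟨gs.take m, gs.drop m, (List.take_append_drop m gs).symm, by simp; omega, by simp; omega⟩

theorem length_comp (f g : Forest S) : (comp f g).length = f.length := by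
  induction f generalizing g with
  | nil => rfl
  | cons t ts ih => simp [comp, ih]

theorem comp_append (p q h : Forest S) :
    comp (p ++ q) h = comp p (h.take (leaves p)) ++ comp q (h.drop (leaves p)) := by
  induction p generalizing h with
  | nil => simp [comp, leaves]
  | cons t ts ih =>
    simp [comp, ih, leaves, List.take_take, List.drop_take, List.drop_drop]

theorem comp_cons_append (a : CTree S) (f p q : Forest S) (hp : p.length = a.leaves) :
    comp (a :: f) (p ++ q) = a.graft p :: comp f q := by
  rw [comp, List.take_left' hp, List.drop_left' hp]

theorem comp_replicate (z y : CTree S) (k : ℕ) :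
    comp (List.replicate k z) (List.replicate (k * z.leaves) y)
      = List.replicate k (z.graft (List.replicate z.leaves y)) := by
  induction k with
  | zero => rfl
  | succ k ih =>
    rw [List.replicate_succ, show (k + 1) * z.leaves = z.leaves + k * z.leaves by ring,
      List.replicate_add, comp_cons_append _ _ _ _ List.length_replicate, ih]
    rfl

end Forest

namespace CTree

variable {S : Type}

theorem leaves_recolour {S' : Type} (c : S → S') (u : CTree S) :
    (u.recolour c).leaves = u.leaves := by
  induction u with
  | leaf => rfl
  | node x l r ihl ihr => simp only [recolour, leaves, ihl, ihr]

theorem recolour_eq_leaf_iff {S' : Type} {c : S → S'} {u : CTree S} :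
    u.recolour c = leaf ↔ u = leaf := by
  cases u <;> simp [recolour]

theorem graft_take_leaves (u : CTree S) (gs : Forest S) :
    u.graft (gs.take u.leaves) = u.graft gs := by
  induction u generalizing gs with
  | leaf => cases gs <;> rfl
  | node c l r ihl ihr =>
    simp only [graft, leaves, List.take_take, List.drop_take, ihl, ihr,
      Nat.min_eq_left (Nat.le_add_right _ _), Nat.add_sub_cancel_left]

theorem graft_node_append (c : S) (l r : CTree S) {fl : Forest S} (fr : Forest S)
    (hfl : fl.length = l.leaves) :
    (node c l r).graft (fl ++ fr) = node c (l.graft fl) (r.graft fr) := by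
  rw [graft, ← hfl, List.take_left' rfl, List.drop_left' rfl]

theorem leaves_graft_s18 {u : CTree S} {gs : Forest S} (h : gs.length = u.leaves) :
    (u.graft gs).leaves = Forest.leaves gs := by
  induction u generalizing gs with
  | leaf =>
    obtain ⟨x, rfl⟩ := List.length_eq_one_iff.mp h
    simp [graft, Forest.leaves]
  | node c l r ihl ihr =>
    obtain ⟨fl, fr, rfl, hfl, hfr⟩ := Forest.exists_append_eq h
    rw [graft_node_append c l r fr hfl, leaves, ihl hfl, ihr hfr, Forest.leaves_append_s18]

theorem graft_graft (u : CTree S) {f : Forest S} (hf : f.length = u.leaves) (h : Forest S) :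
    (u.graft f).graft h = u.graft (Forest.comp f h) := by
  induction u generalizing f h with
  | leaf =>
    obtain ⟨x, rfl⟩ := List.length_eq_one_iff.mp hf
    exact (graft_take_leaves x h).symm
  | node c l r ihl ihr =>
    obtain ⟨fl, fr, rfl, hfl, hfr⟩ := Forest.exists_append_eq hf
    rw [graft_node_append c l r fr hfl, Forest.comp_append,
      graft_node_append c l r _ (by rw [Forest.length_comp, hfl])]
    simp only [graft, leaves_graft_s18 hfl, ihl hfl, ihr hfr]

theorem graft_replicate_leaf (u : CTree S) : u.graft (List.replicate u.leaves leaf) = u := by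
  induction u with
  | leaf => rfl
  | node c l r ihl ihr =>
    rw [leaves, List.replicate_add, graft_node_append c l r _ List.length_replicate, ihl, ihr]

/-- The tree of `F(t)` in which every path from the root to a leaf crosses exactly `D` copies
of `t`. -/
def fullTree (t : CTree S) : ℕ → CTree S
  | 0 => leaf
  | D + 1 => t.graft (List.replicate t.leaves (fullTree t D))

theorem builtFrom_fullTree (t : CTree S) (D : ℕ) : BuiltFrom t (t.fullTree D) := by
  induction D with
  | zero => exact BuiltFrom.leaf
  | succ D ih =>
    exact .graft _ List.length_replicate.symm fun g hg => List.eq_of_mem_replicate hg ▸ ih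

theorem graft_fullTree_replicate (t : CTree S) (D : ℕ) :
    (t.fullTree D).graft (List.replicate (t.fullTree D).leaves t) = t.fullTree (D + 1) := by
  induction D with
  | zero => exact (graft_replicate_leaf t).symm
  | succ D ih =>
    rw [fullTree, graft_graft t List.length_replicate,
      leaves_graft_s18 List.length_replicate, Forest.leaves_replicate, Forest.comp_replicate, ih]
    rfl

def IsMono (c : S) : CTree S → Prop
  | leaf => True
  | node x l r => x = c ∧ IsMono c l ∧ IsMono c r

theorem isMono_recolour (c : S) (x : CTree Unit) : IsMono c (x.recolour fun _ => c) := by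
  induction x with
  | leaf => trivial
  | node _ l r ihl ihr => exact ⟨rfl, ihl, ihr⟩

theorem IsMono.graft {c : S} {u : CTree S} {gs : Forest S} (hu : IsMono c u)
    (hgs : ∀ x ∈ gs, IsMono c x) : IsMono c (u.graft gs) := by
  induction u generalizing gs with
  | leaf =>
    cases gs with
    | nil => trivial
    | cons x xs => exact hgs x List.mem_cons_self
  | node d l r ihl ihr =>
    exact ⟨hu.1, ihl hu.2.1 fun x hx => hgs x (List.take_subset _ _ hx),
      ihr hu.2.2 fun x hx => hgs x (List.drop_subset _ _ hx)⟩

theorem IsMono.fullTree {c : S} {t : CTree S} (ht : IsMono c t) (D : ℕ) :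
    IsMono c (t.fullTree D) := by
  induction D with
  | zero => trivial
  | succ D ih => exact ht.graft fun x hx => List.eq_of_mem_replicate hx ▸ ih

def complete (c : S) : ℕ → CTree S
  | 0 => leaf
  | e + 1 => node c (complete c e) (complete c e)

def IsPrefix : CTree S → CTree S → Prop
  | leaf, _ => True
  | node _ _ _, leaf => False
  | node c l r, node c' l' r' => c = c' ∧ IsPrefix l l' ∧ IsPrefix r r'

theorem IsPrefix.exists_graft {u v : CTree S} (h : IsPrefix u v) :
    ∃ g : Forest S, g.length = u.leaves ∧ u.graft g = v := by
  induction u generalizing v with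
  | leaf => exact ⟨[v], rfl, rfl⟩
  | node d l r ihl ihr =>
    cases v with
    | leaf => exact h.elim
    | node d' l' r' =>
      obtain ⟨rfl, hl, hr⟩ := h
      obtain ⟨gl, hgl, rfl⟩ := ihl hl
      obtain ⟨gr, hgr, rfl⟩ := ihr hr
      exact ⟨gl ++ gr, by simp [leaves, hgl, hgr], graft_node_append d l r gr hgl⟩

theorem IsPrefix.trans {u v w : CTree S} (huv : IsPrefix u v) (hvw : IsPrefix v w) :
    IsPrefix u w := by
  induction u generalizing v w with
  | leaf => trivial
  | node d l r ihl ihr =>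
    cases v with
    | leaf => exact huv.elim
    | node d' l' r' =>
      cases w with
      | leaf => exact hvw.elim
      | node d'' l'' r'' =>
        exact ⟨huv.1.trans hvw.1, ihl huv.2.1 hvw.2.1, ihr huv.2.2 hvw.2.2⟩

theorem complete_isPrefix_complete (c : S) {e e' : ℕ} (h : e ≤ e') :
    IsPrefix (complete c e) (complete c e') := by
  induction e generalizing e' with
  | zero => trivial
  | succ e ih =>
    cases e' with
    | zero => omega
    | succ e' => exact ⟨rfl, ih (by omega), ih (by omega)⟩

theorem IsMono.exists_isPrefix_complete {c : S} {u : CTree S} (hu : IsMono c u) :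
    ∃ e, IsPrefix u (complete c e) := by
  induction u with
  | leaf => exact ⟨0, trivial⟩
  | node d l r ihl ihr =>
    obtain ⟨el, hl⟩ := ihl hu.2.1
    obtain ⟨er, hr⟩ := ihr hu.2.2
    exact ⟨max el er + 1, hu.1, hl.trans (complete_isPrefix_complete c (le_max_left el er)),
      hr.trans (complete_isPrefix_complete c (le_max_right el er))⟩

theorem complete_isPrefix_graft {c : S} {w : CTree S} (hw : IsMono c w) {gs : Forest S}
    (hgs_len : gs.length = w.leaves) {e : ℕ} (hgs : ∀ x ∈ gs, IsPrefix (complete c e) x) :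
    IsPrefix (complete c e) (w.graft gs) := by
  induction w generalizing gs e with
  | leaf =>
    obtain ⟨x, rfl⟩ := List.length_eq_one_iff.mp hgs_len
    exact hgs x List.mem_cons_self
  | node d l r ihl ihr =>
    cases e with
    | zero => trivial
    | succ e =>
      obtain ⟨fl, fr, rfl, hfl, hfr⟩ := Forest.exists_append_eq hgs_len
      rw [graft_node_append d l r fr hfl]
      have hsub : ∀ x ∈ fl ++ fr, IsPrefix (complete c e) x := fun x hx =>
        (complete_isPrefix_complete c e.le_succ).trans (hgs x hx)
      exact ⟨hw.1.symm, ihl hw.2.1 hfl fun x hx => hsub x (List.mem_append_left _ hx),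
        ihr hw.2.2 hfr fun x hx => hsub x (List.mem_append_right _ hx)⟩

theorem complete_isPrefix_fullTree {c : S} {t : CTree S} (ht : IsMono c t) (ht_ne : t ≠ leaf)
    (e : ℕ) : IsPrefix (complete c e) (t.fullTree e) := by
  obtain ⟨d, l, r, rfl⟩ : ∃ d l r, t = node d l r := by
    cases t with
    | leaf => exact absurd rfl ht_ne
    | node d l r => exact ⟨d, l, r, rfl⟩
  induction e with
  | zero => trivial
  | succ e ih =>
    have hsub : ∀ k, ∀ x ∈ List.replicate k ((node d l r).fullTree e),
        IsPrefix (complete c e) x := fun _ x hx => List.eq_of_mem_replicate hx ▸ ih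
    rw [fullTree, leaves, List.replicate_add, graft_node_append d l r _ List.length_replicate]
    exact ⟨ht.1.symm, complete_isPrefix_graft ht.2.1 List.length_replicate (hsub _),
      complete_isPrefix_graft ht.2.2 List.length_replicate (hsub _)⟩

end CTree

namespace SkeinEquiv

variable {S : Type} {R : CTree S → CTree S → Prop}

theorem replicate {u v : CTree S} (h : SkeinEquiv R [u] [v]) (k : ℕ) :
    SkeinEquiv R (List.replicate k u) (List.replicate k v) := by
  induction k with
  | zero => exact refl []
  | succ k ih => exact h.tensor ih

theorem node (c : S) {l l' r r' : CTree S} (hl : SkeinEquiv R [l] [l'])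
    (hr : SkeinEquiv R [r] [r']) : SkeinEquiv R [CTree.node c l r] [CTree.node c l' r'] :=
  (refl [CTree.node c .leaf .leaf]).comp (hl.tensor hr)

theorem graft_right {u v : CTree S} (h : SkeinEquiv R [u] [v]) (g : Forest S) :
    SkeinEquiv R [u.graft g] [v.graft g] := by
  simpa only [Forest.comp, CTree.graft_take_leaves] using h.comp (refl g)

theorem fullTree {t t' : CTree S} (h : SkeinEquiv R [t] [t']) (hl : t.leaves = t'.leaves)
    (D : ℕ) : SkeinEquiv R [t.fullTree D] [t'.fullTree D] := by
  induction D with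
  | zero => exact refl _
  | succ D ih =>
    simpa only [Forest.comp, CTree.graft_take_leaves, CTree.fullTree, hl, List.take_replicate,
      min_self] using h.comp (ih.replicate t.leaves)

end SkeinEquiv

section Domination

variable {S : Type} {R : CTree S → CTree S → Prop}

/-- `v` is a right multiple `u ∘ f` of `u` in the forest-skein category presented by `R`. -/
def Dominates (R : CTree S → CTree S → Prop) (u v : CTree S) : Prop :=
  ∃ f : Forest S, f.length = u.leaves ∧ SkeinEquiv R [u.graft f] [v]

namespace Dominates

theorem refl (u : CTree S) : Dominates R u u :=
  ⟨_, List.length_replicate, by rw [CTree.graft_replicate_leaf]; exact .refl _⟩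

theorem of_isPrefix {u v : CTree S} (h : u.IsPrefix v) : Dominates R u v :=
  let ⟨g, hg, he⟩ := h.exists_graft
  ⟨g, hg, by rw [he]; exact .refl _⟩

theorem trans_skeinEquiv {u v w : CTree S} (h : Dominates R u v) (hvw : SkeinEquiv R [v] [w]) :
    Dominates R u w :=
  let ⟨f, hf, he⟩ := h
  ⟨f, hf, he.trans hvw⟩

theorem trans {u v w : CTree S} (huv : Dominates R u v) (hvw : Dominates R v w) :
    Dominates R u w := by
  obtain ⟨f, hf, hEf⟩ := huv
  obtain ⟨g, -, hEg⟩ := hvw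
  refine ⟨Forest.comp f g, by rw [Forest.length_comp, hf], ?_⟩
  rw [← CTree.graft_graft u hf]
  exact (hEf.graft_right g).trans hEg

theorem node (c : S) {l l' r r' : CTree S} (hl : Dominates R l l') (hr : Dominates R r r') :
    Dominates R (.node c l r) (.node c l' r') := by
  obtain ⟨fl, hfl, hEl⟩ := hl
  obtain ⟨fr, hfr, hEr⟩ := hr
  exact ⟨fl ++ fr, by simp [CTree.leaves, hfl, hfr],
    CTree.graft_node_append c l r fr hfl ▸ hEl.node c hEr⟩

end Dominates

theorem dominates_fullTree_of_le (t : CTree S) {D D' : ℕ} (h : D ≤ D') :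
    Dominates R (t.fullTree D) (t.fullTree D') := by
  induction D', h using Nat.le_induction with
  | base => exact .refl _
  | succ D' _ ih =>
    exact ih.trans
      ⟨_, List.length_replicate, by rw [CTree.graft_fullTree_replicate]; exact .refl _⟩

/-- Here `T c` plays the monochromatic tree `C_c(τ_c)`. -/
theorem exists_dominates_fullTree {t : CTree S} (T : S → CTree S)
    (hT_mono : ∀ c, (T c).IsMono c) (hT_ne : ∀ c, T c ≠ .leaf)
    (hT_leaves : ∀ c, t.leaves = (T c).leaves) (hT : ∀ c, SkeinEquiv R [t] [T c])
    (s : CTree S) : ∃ D, Dominates R s (t.fullTree D) := by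
  induction s with
  | leaf => exact ⟨0, .refl _⟩
  | node c l r ihl ihr =>
    obtain ⟨Dl, hl⟩ := ihl
    obtain ⟨Dr, hr⟩ := ihr
    set D := max Dl Dr
    have hs : Dominates R (.node c l r) (.node c (t.fullTree D) (t.fullTree D)) :=
      (hl.trans (dominates_fullTree_of_le t (le_max_left Dl Dr))).node c
        (hr.trans (dominates_fullTree_of_le t (le_max_right Dl Dr)))
    set u := CTree.node c ((T c).fullTree D) ((T c).fullTree D)
    have hTD := (hT c).fullTree (hT_leaves c) D
    have hsu : Dominates R (.node c l r) u := hs.trans_skeinEquiv (hTD.node c hTD)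
    have hu : u.IsMono c := ⟨rfl, (hT_mono c).fullTree D, (hT_mono c).fullTree D⟩
    obtain ⟨e, hue⟩ := hu.exists_isPrefix_complete
    have hprefix : u.IsPrefix ((T c).fullTree e) :=
      hue.trans (CTree.complete_isPrefix_fullTree (hT_mono c) (hT_ne c) e)
    have hut : Dominates R u (t.fullTree e) :=
      (Dominates.of_isPrefix hprefix).trans_skeinEquiv ((hT c).fullTree (hT_leaves c) e).symm
    exact ⟨e, hsu.trans hut⟩

theorem exists_common_multiple {t : CTree S}
    (hdom : ∀ s, ∃ D, Dominates R s (t.fullTree D)) (a b : CTree S) :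
    ∃ p q : Forest S, p.length = a.leaves ∧ q.length = b.leaves ∧
      SkeinEquiv R [a.graft p] [b.graft q] := by
  obtain ⟨Da, ha⟩ := hdom a
  obtain ⟨Db, hb⟩ := hdom b
  obtain ⟨p, hp, hEp⟩ := ha.trans (dominates_fullTree_of_le t (le_max_left Da Db))
  obtain ⟨q, hq, hEq⟩ := hb.trans (dominates_fullTree_of_le t (le_max_right Da Db))
  exact ⟨p, q, hp, hq, hEp.trans hEq.symm⟩

theorem oreProp_of_exists_common_multiple
    (h : ∀ a b : CTree S, ∃ p q : Forest S, p.length = a.leaves ∧ q.length = b.leaves ∧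
      SkeinEquiv R [a.graft p] [b.graft q]) :
    OreProp (SkeinEquiv R) := by
  intro f g hfg
  induction f generalizing g with
  | nil =>
    obtain rfl := List.length_eq_zero_iff.mp hfg.symm
    exact ⟨[], [], rfl, rfl, .refl []⟩
  | cons a f ih =>
    obtain ⟨b, g, rfl⟩ := List.exists_cons_of_length_eq_add_one hfg.symm
    obtain ⟨p, q, hp, hq, hpq⟩ := h a b
    obtain ⟨p', q', hp', hq', hpq'⟩ := ih g (by simpa using hfg)
    refine ⟨p ++ p', q ++ q', ?_, ?_, ?_⟩
    · show a.leaves + Forest.leaves f = _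
      rw [List.length_append, hp, hp']
    · show b.leaves + Forest.leaves g = _
      rw [List.length_append, hq, hq']
    · rw [Forest.comp_cons_append a f p p' hp, Forest.comp_cons_append b g q q' hq]
      exact hpq.tensor hpq'

end Domination

section Ftau

variable {S : Type}

def tauRel (τ : S → CTree Unit) (u v : CTree S) : Prop :=
  ∃ x y : S, x ≠ y ∧ u = (τ x).recolour (fun _ => x) ∧ v = (τ y).recolour (fun _ => y)

theorem skeinEquiv_tauRel (τ : S → CTree Unit) (x y : S) :
    SkeinEquiv (tauRel τ) [(τ x).recolour fun _ => x] [(τ y).recolour fun _ => y] := by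
  by_cases hxy : x = y
  · subst hxy
    exact .refl _
  · exact .of ⟨x, y, hxy, rfl, rfl⟩

end Ftau

theorem Ftau_ore_general {S : Type} (a₀ : S) (τ : S → CTree Unit)
    (hnt : ∀ a : S, τ a ≠ CTree.leaf)
    (n : ℕ) (hlv : ∀ a : S, CTree.leaves (τ a) = n) :
    (∀ s : CTree S, ∃ (z : CTree S) (f : Forest S),
        BuiltFrom (CTree.recolour (fun _ => a₀) (τ a₀)) z ∧
        CTree.leaves s = f.length ∧
        SkeinEquiv (fun u v => ∃ x y : S, x ≠ y ∧
            u = CTree.recolour (fun _ => x) (τ x) ∧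
            v = CTree.recolour (fun _ => y) (τ y))
          [CTree.graft s f] [z])
    ∧ OreProp (SkeinEquiv (fun u v => ∃ x y : S, x ≠ y ∧
        u = CTree.recolour (fun _ => x) (τ x) ∧
        v = CTree.recolour (fun _ => y) (τ y))) := by
  have hdom : ∀ s, ∃ D, Dominates (tauRel τ) s (((τ a₀).recolour fun _ => a₀).fullTree D) :=
    exists_dominates_fullTree (fun c => (τ c).recolour fun _ => c)
      (fun c => CTree.isMono_recolour c (τ c))
      (fun c h => hnt c (CTree.recolour_eq_leaf_iff.mp h))
      (fun c => by simp only [CTree.leaves_recolour, hlv])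
      (skeinEquiv_tauRel τ a₀)
  refine ⟨fun s => ?_, oreProp_of_exists_common_multiple (exists_common_multiple hdom)⟩
  obtain ⟨D, f, hf, hE⟩ := hdom s
  exact ⟨_, f, CTree.builtFrom_fullTree _ D, hf.symm, hE⟩

/-- for a family `τ : S → {nontrivial monochromatic trees}` with a
common number of leaves `n ≥ 2`, the forest-skein category `F_τ` presented by the
skein relations `C_a(τ_a) = C_b(τ_b)` (for `a ≠ b`) satisfies Ore's property:
every tree is dominated by a tree all of whose carets are copies of the common
tree `t = C_{a₀}(τ_{a₀})`. -/
theorem Ftau_ore {S : Type} (a₀ : S) (τ : S → CTree Unit)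
    (hnt : ∀ a : S, τ a ≠ CTree.leaf)
    (n : ℕ) (hn : 2 ≤ n) (hlv : ∀ a : S, CTree.leaves (τ a) = n) :
    (∀ s : CTree S, ∃ (z : CTree S) (f : Forest S),
        BuiltFrom (CTree.recolour (fun _ => a₀) (τ a₀)) z ∧
        CTree.leaves s = f.length ∧
        SkeinEquiv (fun u v => ∃ x y : S, x ≠ y ∧
            u = CTree.recolour (fun _ => x) (τ x) ∧
            v = CTree.recolour (fun _ => y) (τ y))
          [CTree.graft s f] [z])
    ∧ OreProp (SkeinEquiv (fun u v => ∃ x y : S, x ≠ y ∧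
        u = CTree.recolour (fun _ => x) (τ x) ∧
        v = CTree.recolour (fun _ => y) (τ y))) :=
  Ftau_ore_general a₀ τ hnt n hlv

end ForestSkein
end
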